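/- For the Maxwell–Stefan two-component system in one space dimension with smooth solution (ρ₀, ρ₁, v₀, v₁) and chemical potentials derived from a smooth free energy ψ(ρ₀, ρ₁) via μ_a = ∂ψ/∂ρ_a, smooth solutions dissipate the total mechanical energy E := ½ρ₀v₀² + ½ρ₁v₁² + ψ(ρ₀,ρ₁): ∂ₜ(½ρ₀v₀² + ½ρ₁v₁² + ψ(ρ₀,ρ₁)) + ∂ₓ(½ρ₀v₀³ + ½ρ₁v₁³ + ρ₀μ₀(ρ₀,ρ₁)v₀ + ρ₁μ₁(ρ₀,ρ₁)v₁) = −T f ρ₀ρ₁(v₀ − v₁)² ≤ 0. -/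

import Mathlib

open Set

/-- Partial derivative in time for a scalar field on `ℝ × ℝ` (space × time). -/
noncomputable def dt1 (g : ℝ × ℝ → ℝ) (p : ℝ × ℝ) : ℝ := deriv (fun s => g (p.1, s)) p.2

/-- Partial derivative in space for a scalar field on `ℝ × ℝ` (space × time). -/
noncomputable def dx1 (g : ℝ × ℝ → ℝ) (p : ℝ × ℝ) : ℝ := deriv (fun y => g (y, p.2)) p.1

/-- `(r₀, r₁, u₀, u₁)` is a continuously differentiable solution of the one-dimensional
isothermal two-component Euler system with Maxwell–Stefan friction on `S`. -/
def IsMS1DSolution (T f : ℝ) (μ₀ μ₁ : ℝ × ℝ → ℝ) (S : Set (ℝ × ℝ))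
    (r₀ r₁ u₀ u₁ : ℝ × ℝ → ℝ) : Prop :=
  (∀ p ∈ S, 0 < r₀ p ∧ 0 < r₁ p) ∧
  ContDiffOn ℝ 1 r₀ S ∧ ContDiffOn ℝ 1 r₁ S ∧
  ContDiffOn ℝ 1 u₀ S ∧ ContDiffOn ℝ 1 u₁ S ∧
  (∀ p ∈ S, dt1 r₀ p + dx1 (fun q => r₀ q * u₀ q) p = 0) ∧
  (∀ p ∈ S, dt1 r₁ p + dx1 (fun q => r₁ q * u₁ q) p = 0) ∧
  (∀ p ∈ S, dt1 (fun q => r₀ q * u₀ q) p + dx1 (fun q => r₀ q * u₀ q ^ 2) p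
      + r₀ p * dx1 (fun q => μ₀ (r₀ q, r₁ q)) p
    = -(T * f * r₀ p * r₁ p) * (u₀ p - u₁ p)) ∧
  (∀ p ∈ S, dt1 (fun q => r₁ q * u₁ q) p + dx1 (fun q => r₁ q * u₁ q ^ 2) p
      + r₁ p * dx1 (fun q => μ₁ (r₀ q, r₁ q)) p
    = -(T * f * r₀ p * r₁ p) * (u₁ p - u₀ p))

private lemma hasDerivAt_dx (g : ℝ × ℝ → ℝ) (x t : ℝ) (hg : DifferentiableAt ℝ g (x, t)) :
    HasDerivAt (fun y => g (y, t)) (fderiv ℝ g (x, t) (1, 0)) x := by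
  have h1 : HasDerivAt (fun y : ℝ => (y, t)) ((1 : ℝ), (0 : ℝ)) x :=
    (hasDerivAt_id x).prodMk (hasDerivAt_const x t)
  exact hg.hasFDerivAt.comp_hasDerivAt x h1

private lemma hasDerivAt_dt (g : ℝ × ℝ → ℝ) (x t : ℝ) (hg : DifferentiableAt ℝ g (x, t)) :
    HasDerivAt (fun s => g (x, s)) (fderiv ℝ g (x, t) (0, 1)) t := by
  have h1 : HasDerivAt (fun s : ℝ => (x, s)) ((0 : ℝ), (1 : ℝ)) t :=
    (hasDerivAt_const t x).prodMk (hasDerivAt_id t)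
  exact hg.hasFDerivAt.comp_hasDerivAt t h1

/-- Energy dissipation for smooth solutions of the one-dimensional isothermal
two-component Euler system with Maxwell–Stefan friction, where the chemical potentials
derive from a smooth free energy `ψ` via `μ_a = ∂ψ/∂ρ_a`: the total mechanical energy
density satisfies
`∂ₜ(½ρ₀v₀² + ½ρ₁v₁² + ψ) + ∂ₓ(½ρ₀v₀³ + ½ρ₁v₁³ + ρ₀μ₀v₀ + ρ₁μ₁v₁) = -T f ρ₀ρ₁(v₀-v₁)² ≤ 0`. -/
theorem mechanical_energy_dissipation
    (T f : ℝ) (hT : 0 < T) (hf : 0 < f)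
    (ψ : ℝ × ℝ → ℝ) (hψ : ContDiffOn ℝ (⊤ : ℕ∞) ψ (Ioi 0 ×ˢ Ioi 0))
    (S : Set (ℝ × ℝ)) (hS : IsOpen S)
    (ρ₀ ρ₁ v₀ v₁ : ℝ × ℝ → ℝ)
    (hρ₀ : ContDiffOn ℝ (⊤ : ℕ∞) ρ₀ S) (hρ₁ : ContDiffOn ℝ (⊤ : ℕ∞) ρ₁ S)
    (hv₀ : ContDiffOn ℝ (⊤ : ℕ∞) v₀ S) (hv₁ : ContDiffOn ℝ (⊤ : ℕ∞) v₁ S)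
    (hsol : IsMS1DSolution T f
      (fun r => fderiv ℝ ψ r (1, 0)) (fun r => fderiv ℝ ψ r (0, 1)) S ρ₀ ρ₁ v₀ v₁) :
    ∀ p ∈ S,
      dt1 (fun q => ρ₀ q * v₀ q ^ 2 / 2 + ρ₁ q * v₁ q ^ 2 / 2 + ψ (ρ₀ q, ρ₁ q)) p
        + dx1 (fun q => ρ₀ q * v₀ q ^ 3 / 2 + ρ₁ q * v₁ q ^ 3 / 2
            + ρ₀ q * fderiv ℝ ψ (ρ₀ q, ρ₁ q) (1, 0) * v₀ q
            + ρ₁ q * fderiv ℝ ψ (ρ₀ q, ρ₁ q) (0, 1) * v₁ q) p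
      = -(T * f * ρ₀ p * ρ₁ p) * (v₀ p - v₁ p) ^ 2 ∧
      -(T * f * ρ₀ p * ρ₁ p) * (v₀ p - v₁ p) ^ 2 ≤ 0 := by
  obtain ⟨hpos, -, -, -, -, hmass0, hmass1, hmom0, hmom1⟩ := hsol
  intro p hp
  obtain ⟨x, t⟩ := p
  have hnb : S ∈ nhds (x, t) := hS.mem_nhds hp
  have hd0 : DifferentiableAt ℝ ρ₀ (x, t) := (hρ₀.contDiffAt hnb).differentiableAt (by simp)
  have hd1 : DifferentiableAt ℝ ρ₁ (x, t) := (hρ₁.contDiffAt hnb).differentiableAt (by simp)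
  have hdv0 : DifferentiableAt ℝ v₀ (x, t) := (hv₀.contDiffAt hnb).differentiableAt (by simp)
  have hdv1 : DifferentiableAt ℝ v₁ (x, t) := (hv₁.contDiffAt hnb).differentiableAt (by simp)
  have hUo : IsOpen (Ioi (0:ℝ) ×ˢ Ioi (0:ℝ)) := isOpen_Ioi.prod isOpen_Ioi
  have hmem : (ρ₀ (x, t), ρ₁ (x, t)) ∈ Ioi (0:ℝ) ×ˢ Ioi (0:ℝ) :=
    Set.mem_prod.2 ⟨(hpos (x, t) hp).1, (hpos (x, t) hp).2⟩
  have hψd : DifferentiableAt ℝ ψ (ρ₀ (x, t), ρ₁ (x, t)) :=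
    (hψ.contDiffAt (hUo.mem_nhds hmem)).differentiableAt (by simp)
  have hfd : ContDiffOn ℝ (⊤ : ℕ∞) (fderiv ℝ ψ) (Ioi 0 ×ˢ Ioi 0) :=
    hψ.fderiv_of_isOpen hUo (by simp)
  have hM0 : DifferentiableAt ℝ (fun r : ℝ × ℝ => fderiv ℝ ψ r (1, 0)) (ρ₀ (x, t), ρ₁ (x, t)) :=
    ((hfd.clm_apply contDiffOn_const).contDiffAt (hUo.mem_nhds hmem)).differentiableAt (by simp)
  have hM1 : DifferentiableAt ℝ (fun r : ℝ × ℝ => fderiv ℝ ψ r (0, 1)) (ρ₀ (x, t), ρ₁ (x, t)) :=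
    ((hfd.clm_apply contDiffOn_const).contDiffAt (hUo.mem_nhds hmem)).differentiableAt (by simp)
  have hg0 : DifferentiableAt ℝ (fun q : ℝ × ℝ => fderiv ℝ ψ (ρ₀ q, ρ₁ q) (1, 0)) (x, t) :=
    by have := hM0.comp (x, t) (hd0.prodMk hd1); exact this
  have hg1 : DifferentiableAt ℝ (fun q : ℝ × ℝ => fderiv ℝ ψ (ρ₀ q, ρ₁ q) (0, 1)) (x, t) :=
    by have := hM1.comp (x, t) (hd0.prodMk hd1); exact this
  -- basic partial derivatives
  have h0x := hasDerivAt_dx ρ₀ x t hd0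
  have h0t := hasDerivAt_dt ρ₀ x t hd0
  have h1x := hasDerivAt_dx ρ₁ x t hd1
  have h1t := hasDerivAt_dt ρ₁ x t hd1
  have hv0x := hasDerivAt_dx v₀ x t hdv0
  have hv0t := hasDerivAt_dt v₀ x t hdv0
  have hv1x := hasDerivAt_dx v₁ x t hdv1
  have hv1t := hasDerivAt_dt v₁ x t hdv1
  have hg0x : HasDerivAt (fun y => fderiv ℝ ψ (ρ₀ (y, t), ρ₁ (y, t)) (1, 0))
      (fderiv ℝ (fun q : ℝ × ℝ => fderiv ℝ ψ (ρ₀ q, ρ₁ q) (1, 0)) (x, t) (1, 0)) x :=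
    hasDerivAt_dx _ x t hg0
  have hg1x : HasDerivAt (fun y => fderiv ℝ ψ (ρ₀ (y, t), ρ₁ (y, t)) (0, 1))
      (fderiv ℝ (fun q : ℝ × ℝ => fderiv ℝ ψ (ρ₀ q, ρ₁ q) (0, 1)) (x, t) (1, 0)) x :=
    hasDerivAt_dx _ x t hg1
  -- chain rule in time for ψ(ρ₀, ρ₁)
  have hψt : HasDerivAt (fun s => ψ (ρ₀ (x, s), ρ₁ (x, s)))
      (fderiv ℝ ψ (ρ₀ (x, t), ρ₁ (x, t)) (1, 0) * fderiv ℝ ρ₀ (x, t) (0, 1)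
        + fderiv ℝ ψ (ρ₀ (x, t), ρ₁ (x, t)) (0, 1) * fderiv ℝ ρ₁ (x, t) (0, 1)) t := by
    have hin : HasDerivAt (fun s => (ρ₀ (x, s), ρ₁ (x, s)))
        (fderiv ℝ ρ₀ (x, t) (0, 1), fderiv ℝ ρ₁ (x, t) (0, 1)) t := h0t.prodMk h1t
    have key := hψd.hasFDerivAt.comp_hasDerivAt t hin
    have hval : fderiv ℝ ψ (ρ₀ (x, t), ρ₁ (x, t))
        (fderiv ℝ ρ₀ (x, t) (0, 1), fderiv ℝ ρ₁ (x, t) (0, 1))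
        = fderiv ℝ ψ (ρ₀ (x, t), ρ₁ (x, t)) (1, 0) * fderiv ℝ ρ₀ (x, t) (0, 1)
          + fderiv ℝ ψ (ρ₀ (x, t), ρ₁ (x, t)) (0, 1) * fderiv ℝ ρ₁ (x, t) (0, 1) := by
      have h2 : ((fderiv ℝ ρ₀ (x, t) (0, 1), fderiv ℝ ρ₁ (x, t) (0, 1)) : ℝ × ℝ)
          = fderiv ℝ ρ₀ (x, t) (0, 1) • ((1 : ℝ), (0 : ℝ))
            + fderiv ℝ ρ₁ (x, t) (0, 1) • ((0 : ℝ), (1 : ℝ)) := by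
        simp [Prod.ext_iff]
      rw [h2, map_add, map_smul, map_smul, smul_eq_mul, smul_eq_mul]; ring
    exact hval ▸ key
  -- product rules
  have hrv0t : HasDerivAt (fun s => ρ₀ (x, s) * v₀ (x, s))
      (fderiv ℝ ρ₀ (x, t) (0, 1) * v₀ (x, t) + ρ₀ (x, t) * fderiv ℝ v₀ (x, t) (0, 1)) t :=
    h0t.mul hv0t
  have hrv1t : HasDerivAt (fun s => ρ₁ (x, s) * v₁ (x, s))
      (fderiv ℝ ρ₁ (x, t) (0, 1) * v₁ (x, t) + ρ₁ (x, t) * fderiv ℝ v₁ (x, t) (0, 1)) t :=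
    h1t.mul hv1t
  have hrv0x : HasDerivAt (fun y => ρ₀ (y, t) * v₀ (y, t))
      (fderiv ℝ ρ₀ (x, t) (1, 0) * v₀ (x, t) + ρ₀ (x, t) * fderiv ℝ v₀ (x, t) (1, 0)) x :=
    h0x.mul hv0x
  have hrv1x : HasDerivAt (fun y => ρ₁ (y, t) * v₁ (y, t))
      (fderiv ℝ ρ₁ (x, t) (1, 0) * v₁ (x, t) + ρ₁ (x, t) * fderiv ℝ v₁ (x, t) (1, 0)) x :=
    h1x.mul hv1x
  have hrvv0x : HasDerivAt (fun y => ρ₀ (y, t) * v₀ (y, t) ^ 2)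
      (fderiv ℝ ρ₀ (x, t) (1, 0) * v₀ (x, t) ^ 2
        + ρ₀ (x, t) * (((2 : ℕ) : ℝ) * v₀ (x, t) ^ (2 - 1) * fderiv ℝ v₀ (x, t) (1, 0))) x :=
    h0x.mul (hv0x.pow 2)
  have hrvv1x : HasDerivAt (fun y => ρ₁ (y, t) * v₁ (y, t) ^ 2)
      (fderiv ℝ ρ₁ (x, t) (1, 0) * v₁ (x, t) ^ 2
        + ρ₁ (x, t) * (((2 : ℕ) : ℝ) * v₁ (x, t) ^ (2 - 1) * fderiv ℝ v₁ (x, t) (1, 0))) x :=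
    h1x.mul (hv1x.pow 2)
  -- energy time derivative
  have hEt : HasDerivAt
      (fun s => ρ₀ (x, s) * v₀ (x, s) ^ 2 / 2 + ρ₁ (x, s) * v₁ (x, s) ^ 2 / 2
        + ψ (ρ₀ (x, s), ρ₁ (x, s)))
      ((fderiv ℝ ρ₀ (x, t) (0, 1) * v₀ (x, t) ^ 2
          + ρ₀ (x, t) * (((2 : ℕ) : ℝ) * v₀ (x, t) ^ (2 - 1) * fderiv ℝ v₀ (x, t) (0, 1))) / 2
        + (fderiv ℝ ρ₁ (x, t) (0, 1) * v₁ (x, t) ^ 2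
          + ρ₁ (x, t) * (((2 : ℕ) : ℝ) * v₁ (x, t) ^ (2 - 1) * fderiv ℝ v₁ (x, t) (0, 1))) / 2
        + (fderiv ℝ ψ (ρ₀ (x, t), ρ₁ (x, t)) (1, 0) * fderiv ℝ ρ₀ (x, t) (0, 1)
          + fderiv ℝ ψ (ρ₀ (x, t), ρ₁ (x, t)) (0, 1) * fderiv ℝ ρ₁ (x, t) (0, 1))) t :=
    (((h0t.mul (hv0t.pow 2)).div_const 2).add ((h1t.mul (hv1t.pow 2)).div_const 2)).add hψt
  -- energy flux derivative
  have hFx : HasDerivAt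
      (fun y => ρ₀ (y, t) * v₀ (y, t) ^ 3 / 2 + ρ₁ (y, t) * v₁ (y, t) ^ 3 / 2
        + ρ₀ (y, t) * fderiv ℝ ψ (ρ₀ (y, t), ρ₁ (y, t)) (1, 0) * v₀ (y, t)
        + ρ₁ (y, t) * fderiv ℝ ψ (ρ₀ (y, t), ρ₁ (y, t)) (0, 1) * v₁ (y, t))
      ((fderiv ℝ ρ₀ (x, t) (1, 0) * v₀ (x, t) ^ 3
          + ρ₀ (x, t) * (((3 : ℕ) : ℝ) * v₀ (x, t) ^ (3 - 1) * fderiv ℝ v₀ (x, t) (1, 0))) / 2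
        + (fderiv ℝ ρ₁ (x, t) (1, 0) * v₁ (x, t) ^ 3
          + ρ₁ (x, t) * (((3 : ℕ) : ℝ) * v₁ (x, t) ^ (3 - 1) * fderiv ℝ v₁ (x, t) (1, 0))) / 2
        + ((fderiv ℝ ρ₀ (x, t) (1, 0) * fderiv ℝ ψ (ρ₀ (x, t), ρ₁ (x, t)) (1, 0)
            + ρ₀ (x, t) * fderiv ℝ (fun q : ℝ × ℝ => fderiv ℝ ψ (ρ₀ q, ρ₁ q) (1, 0)) (x, t) (1, 0))
              * v₀ (x, t)
          + ρ₀ (x, t) * fderiv ℝ ψ (ρ₀ (x, t), ρ₁ (x, t)) (1, 0) * fderiv ℝ v₀ (x, t) (1, 0))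
        + ((fderiv ℝ ρ₁ (x, t) (1, 0) * fderiv ℝ ψ (ρ₀ (x, t), ρ₁ (x, t)) (0, 1)
            + ρ₁ (x, t) * fderiv ℝ (fun q : ℝ × ℝ => fderiv ℝ ψ (ρ₀ q, ρ₁ q) (0, 1)) (x, t) (1, 0))
              * v₁ (x, t)
          + ρ₁ (x, t) * fderiv ℝ ψ (ρ₀ (x, t), ρ₁ (x, t)) (0, 1) * fderiv ℝ v₁ (x, t) (1, 0))) x :=
    ((((h0x.mul (hv0x.pow 3)).div_const 2).add ((h1x.mul (hv1x.pow 3)).div_const 2)).add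
      ((h0x.mul hg0x).mul hv0x)).add ((h1x.mul hg1x).mul hv1x)
  -- the four PDEs at (x, t)
  have e1 := hmass0 (x, t) hp
  have e2 := hmass1 (x, t) hp
  have e3 := hmom0 (x, t) hp
  have e4 := hmom1 (x, t) hp
  simp only [dt1, dx1] at e1 e2 e3 e4 ⊢
  rw [h0t.deriv, hrv0x.deriv] at e1
  rw [h1t.deriv, hrv1x.deriv] at e2
  rw [hrv0t.deriv, hrvv0x.deriv, hg0x.deriv] at e3
  rw [hrv1t.deriv, hrvv1x.deriv, hg1x.deriv] at e4
  rw [hEt.deriv, hFx.deriv]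
  constructor
  · linear_combination v₀ (x, t) * e3 + v₁ (x, t) * e4
      + (fderiv ℝ ψ (ρ₀ (x, t), ρ₁ (x, t)) (1, 0) - v₀ (x, t) ^ 2 / 2) * e1
      + (fderiv ℝ ψ (ρ₀ (x, t), ρ₁ (x, t)) (0, 1) - v₁ (x, t) ^ 2 / 2) * e2
  · nlinarith [mul_pos (mul_pos (mul_pos hT hf) (hpos (x, t) hp).1) (hpos (x, t) hp).2,
      sq_nonneg (v₀ (x, t) - v₁ (x, t))]
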